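/- In the electricity pool model (P2), the lower bound of MCI, LBMCI(E) = a·min_{1 ≤ t ≤ T} g*_t(E) + b, is monotonically non-decreasing in E on [0, ∞); equivalently, the map E ↦ min_t g*_t(E) is non-decreasing. -/

import Mathlib

/-!
Let `v` be optimal at capacity `E'`, and let its generation `g = d + v` take its minimum `m'` on a
maximal run of consecutive steps. Carrying `ε` of energy over from step `k` to step `k + 1` changes
the cost by `a (ε (g k - g (k + 1)) + ε ^ 2)`, so at an optimum generation can rise from step `k` to
`k + 1` only if the store is full after step `k`, and fall only if it is empty. Hence at the right
end of the run the store is full (or the horizon ends) and just before its left end it is empty (or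
the horizon starts). Since generation over the run is demand plus net charge, the run's total
generation is maximal for `v` among all profiles feasible at any capacity `E ≤ E'`, and averaging
over the run bounds the minimal generation of each of them by `m'`.
-/

open Finset Filter

/-- Feasibility for the electricity pool model (P2) at storage capacity `E`:
the states of charge `x_k = E/2 + ∑_{t ≤ k} u t` (with `x_0 = E/2`) satisfy
`0 ≤ x_k ≤ E` for all `k`, and the terminal condition `x_T = E/2` holds. -/
def poolFeasible (T : ℕ) (E : ℝ) (u : Fin T → ℝ) : Prop :=
  (∀ k : Fin T, 0 ≤ E / 2 + ∑ t ∈ Finset.Iic k, u t) ∧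
  (∀ k : Fin T, E / 2 + ∑ t ∈ Finset.Iic k, u t ≤ E) ∧
  E / 2 + ∑ t, u t = E / 2

/-- Total generation cost `∑ t C (d t + u t)` with `C g = (1/2)·a·g² + b·g + c`. -/
noncomputable def poolCost (T : ℕ) (a b c : ℝ) (d u : Fin T → ℝ) : ℝ :=
  ∑ t, ((1 / 2) * a * (d t + u t) ^ 2 + b * (d t + u t) + c)

/-- Optimal cost `C*(E)` of the pool model (P2). -/
noncomputable def poolCstar (T : ℕ) (a b c : ℝ) (d : Fin T → ℝ) (E : ℝ) : ℝ :=
  sInf {y : ℝ | ∃ u : Fin T → ℝ, poolFeasible T E u ∧ y = poolCost T a b c d u}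

section ZeroExtend

variable {M : Type*} {T : ℕ}

def zeroExtend [Zero M] (f : Fin T → M) (n : ℕ) : M :=
  if h : n < T then f ⟨n, h⟩ else 0

lemma zeroExtend_of_lt [Zero M] (f : Fin T → M) {n : ℕ} (h : n < T) :
    zeroExtend f n = f ⟨n, h⟩ :=
  dif_pos h

@[simp]
lemma zeroExtend_val [Zero M] (f : Fin T → M) (t : Fin T) : zeroExtend f t = f t :=
  dif_pos t.2

lemma zeroExtend_add [AddZeroClass M] (f g : Fin T → M) :
    zeroExtend (f + g) = zeroExtend f + zeroExtend g := by
  funext n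
  simp only [zeroExtend, Pi.add_apply]
  split_ifs <;> simp

lemma sum_Iic_eq_sum_range_zeroExtend [AddCommMonoid M] (f : Fin T → M) (k : Fin T) :
    ∑ t ∈ Iic k, f t = ∑ n ∈ range (k + 1), zeroExtend f n := by
  rw [Nat.range_succ_eq_Iic, ← Fin.map_valEmbedding_Iic, sum_map]
  simp

lemma sum_univ_eq_sum_range_zeroExtend [AddCommMonoid M] (f : Fin T → M) :
    ∑ t, f t = ∑ n ∈ range T, zeroExtend f n := by
  rw [← Fin.sum_univ_eq_sum_range]
  simp

end ZeroExtend

/-- The state of charge after `n` steps is `E / 2 + netCharge u n`. -/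
def netCharge {T : ℕ} (u : Fin T → ℝ) (n : ℕ) : ℝ :=
  ∑ i ∈ range n, zeroExtend u i

lemma poolFeasible_iff {T : ℕ} {E : ℝ} {u : Fin T → ℝ} :
    poolFeasible T E u ↔
      (∀ k < T, 0 ≤ E / 2 + netCharge u (k + 1) ∧ E / 2 + netCharge u (k + 1) ≤ E) ∧
        netCharge u T = 0 := by
  simp only [poolFeasible, netCharge, sum_Iic_eq_sum_range_zeroExtend,
    ← sum_univ_eq_sum_range_zeroExtend, add_eq_left, Fin.forall_iff, forall_and, and_assoc]

lemma le_poolCost_of_sum_eq_zero {T : ℕ} {a b c : ℝ} {d u : Fin T → ℝ} (ha : 0 ≤ a)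
    (hu : ∑ t, u t = 0) : b * ∑ t, d t + T * c ≤ poolCost T a b c d u := by
  calc b * ∑ t, d t + T * c = ∑ t, (b * (d t + u t) + c) := by
        simp [sum_add_distrib, mul_add, ← mul_sum, hu]
    _ ≤ poolCost T a b c d u :=
        sum_le_sum fun t _ => by nlinarith [sq_nonneg (d t + u t)]

lemma isMinOn_poolCost_of_eq_poolCstar {T : ℕ} {a b c E : ℝ} {d u : Fin T → ℝ} (ha : 0 ≤ a)
    (h : poolCost T a b c d u = poolCstar T a b c d E) :
    IsMinOn (poolCost T a b c d) {v | poolFeasible T E v} u := by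
  intro v hv
  rw [h]
  refine csInf_le ⟨b * ∑ t, d t + T * c, ?_⟩ ⟨v, hv, rfl⟩
  rintro _ ⟨w, hw, rfl⟩
  exact le_poolCost_of_sum_eq_zero ha (by linarith [hw.2.2])

/-- Store `ε` more at step `k` and release it at step `k + 1`. -/
def carryOver {T : ℕ} (u : Fin T → ℝ) (k : ℕ) (ε : ℝ) : Fin T → ℝ :=
  fun t => u t + (if (t : ℕ) = k then ε else 0) - (if (t : ℕ) = k + 1 then ε else 0)

section CarryOver

variable {T k : ℕ} {u : Fin T → ℝ} {ε : ℝ}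

lemma zeroExtend_carryOver (hk : k + 1 < T) (n : ℕ) :
    zeroExtend (carryOver u k ε) n =
      zeroExtend u n + (if n = k then ε else 0) - (if n = k + 1 then ε else 0) := by
  by_cases hn : n < T
  · simp [zeroExtend_of_lt _ hn, carryOver]
  · simp [zeroExtend, hn, show n ≠ k by omega, show n ≠ k + 1 by omega]

lemma netCharge_carryOver (hk : k + 1 < T) (n : ℕ) :
    netCharge (carryOver u k ε) n = netCharge u n + if n = k + 1 then ε else 0 := by
  simp only [netCharge, zeroExtend_carryOver hk, sum_sub_distrib, sum_add_distrib,
    sum_ite_eq', mem_range]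
  split_ifs <;> first | (exfalso; omega) | ring

lemma poolFeasible_carryOver {E : ℝ} (hu : poolFeasible T E u) (hk : k + 1 < T)
    (h₀ : 0 ≤ E / 2 + netCharge u (k + 1) + ε) (hcap : E / 2 + netCharge u (k + 1) + ε ≤ E) :
    poolFeasible T E (carryOver u k ε) := by
  rw [poolFeasible_iff] at hu ⊢
  refine ⟨fun j hj => ?_, ?_⟩
  · rw [netCharge_carryOver hk]
    split_ifs with hjk
    · rw [hjk, ← add_assoc]
      exact ⟨h₀, hcap⟩
    · simpa using hu.1 j hj
  · rw [netCharge_carryOver hk, if_neg hk.ne', hu.2, add_zero]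

lemma poolCost_carryOver (a b c : ℝ) (d : Fin T → ℝ) (hk : k + 1 < T) :
    poolCost T a b c d (carryOver u k ε) = poolCost T a b c d u +
      a * (ε * (zeroExtend (d + u) k - zeroExtend (d + u) (k + 1)) + ε ^ 2) := by
  let i : Fin T := ⟨k, by omega⟩
  let j : Fin T := ⟨k + 1, hk⟩
  rw [← sub_eq_iff_eq_add', poolCost, poolCost, ← sum_sub_distrib,
    Fintype.sum_eq_add i j (by simp [i, j, Fin.ext_iff])]
  · simp [i, j, carryOver, zeroExtend_of_lt _ hk, zeroExtend_of_lt _ (show k < T by omega)]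
    ring
  · rintro t ⟨hti, htj⟩
    have hti' : (t : ℕ) ≠ k := fun h => hti (Fin.ext h)
    have htj' : (t : ℕ) ≠ k + 1 := fun h => htj (Fin.ext h)
    simp [carryOver, hti', htj']

end CarryOver

lemma nonneg_of_forall_mul_add_sq_nonneg {δ r : ℝ} (hr : 0 < r)
    (h : ∀ ε, 0 < ε → ε ≤ r → 0 ≤ ε * δ + ε ^ 2) : 0 ≤ δ := by
  by_contra! hδ
  have hε : 0 < min r (-δ / 2) := lt_min hr (by linarith)
  nlinarith [h _ hε (min_le_left _ _), min_le_right r (-δ / 2)]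

section Optimality

variable {T k : ℕ} {a b c E : ℝ} {d u : Fin T → ℝ}

lemma carryOver_nonneg (ha : 0 < a)
    (hopt : IsMinOn (poolCost T a b c d) {v | poolFeasible T E v} u)
    (hu : poolFeasible T E u) (hk : k + 1 < T) {ε : ℝ}
    (h₀ : 0 ≤ E / 2 + netCharge u (k + 1) + ε) (hcap : E / 2 + netCharge u (k + 1) + ε ≤ E) :
    0 ≤ ε * (zeroExtend (d + u) k - zeroExtend (d + u) (k + 1)) + ε ^ 2 := by
  have h := isMinOn_iff.mp hopt _ (poolFeasible_carryOver hu hk h₀ hcap)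
  rw [poolCost_carryOver a b c d hk, le_add_iff_nonneg_right] at h
  exact (mul_nonneg_iff_of_pos_left ha).mp h

lemma zeroExtend_succ_le_of_charge_lt (ha : 0 < a)
    (hopt : IsMinOn (poolCost T a b c d) {v | poolFeasible T E v} u)
    (hu : poolFeasible T E u) (hk : k + 1 < T) (hlt : E / 2 + netCharge u (k + 1) < E) :
    zeroExtend (d + u) (k + 1) ≤ zeroExtend (d + u) k := by
  have h₀ := ((poolFeasible_iff.mp hu).1 k (by omega)).1
  have := nonneg_of_forall_mul_add_sq_nonneg (sub_pos.mpr hlt) fun ε hε hεr =>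
    carryOver_nonneg ha hopt hu hk (by linarith) (by linarith)
  linarith

lemma zeroExtend_le_succ_of_charge_pos (ha : 0 < a)
    (hopt : IsMinOn (poolCost T a b c d) {v | poolFeasible T E v} u)
    (hu : poolFeasible T E u) (hk : k + 1 < T) (hpos : 0 < E / 2 + netCharge u (k + 1)) :
    zeroExtend (d + u) k ≤ zeroExtend (d + u) (k + 1) := by
  have hcap := ((poolFeasible_iff.mp hu).1 k (by omega)).2
  have := nonneg_of_forall_mul_add_sq_nonneg
      (δ := zeroExtend (d + u) (k + 1) - zeroExtend (d + u) k) hpos fun ε hε hεr => by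
    convert carryOver_nonneg ha hopt hu hk (ε := -ε) (by linarith) (by linarith) using 1
    ring
  linarith

end Optimality

lemma exists_maximal_run {P : ℕ → Prop} {T t₀ : ℕ} (ht₀ : t₀ < T) (hP : P t₀) :
    ∃ p q, p ≤ t₀ ∧ t₀ ≤ q ∧ q < T ∧ (∀ n, p ≤ n → n ≤ q → P n) ∧
      (∀ k, k + 1 = p → ¬ P k) ∧ (q + 1 < T → ¬ P (q + 1)) := by
  classical
  have hex : ∃ r, t₀ < r ∧ (r = T ∨ ¬ P r) := ⟨T, ht₀, Or.inl rfl⟩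
  have hrT : Nat.find hex ≤ T := Nat.find_min' hex ⟨ht₀, Or.inl rfl⟩
  have hright : ∀ n, t₀ < n → n < Nat.find hex → P n := fun n h₁ h₂ => by
    have := Nat.find_min hex h₂
    push Not at this
    exact (this h₁).2
  set p := Nat.findGreatest (fun n => ∀ k, k + 1 = n → ¬ P k) t₀
  have hleft : ∀ n, p ≤ n → n < t₀ → P n := fun n h₁ h₂ => by
    have := Nat.findGreatest_is_greatest (lt_of_le_of_lt h₁ (Nat.lt_succ_self n)) h₂
    push Not at this
    obtain ⟨k, hk, hPk⟩ := this
    rwa [Nat.succ_injective hk] at hPk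
  have hp : ∀ k, k + 1 = p → ¬ P k :=
    Nat.findGreatest_spec (P := fun n => ∀ k, k + 1 = n → ¬ P k) (Nat.zero_le t₀)
      fun _ h => (Nat.succ_ne_zero _ h).elim
  refine ⟨p, Nat.find hex - 1, Nat.findGreatest_le t₀, by grind, by grind, fun n h₁ h₂ => ?_,
    hp, fun h => ?_⟩
  · rcases lt_trichotomy n t₀ with h | rfl | h
    exacts [hleft n h₁ h, hP, hright n h (by grind)]
  · have hr := (Nat.find_spec hex).2
    rw [Nat.sub_add_cancel (by grind)] at h ⊢
    exact hr.resolve_left h.ne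

lemma sum_Ico_zeroExtend_add {T p r : ℕ} (d u : Fin T → ℝ) (h : p ≤ r) :
    ∑ n ∈ Ico p r, zeroExtend (d + u) n =
      ∑ n ∈ Ico p r, zeroExtend d n + (netCharge u r - netCharge u p) := by
  simp only [zeroExtend_add, Pi.add_apply, sum_add_distrib]
  rw [netCharge, netCharge, ← sum_Ico_eq_sub _ h]

lemma le_of_netCharge_le_on_Ico {T p r : ℕ} {d u v : Fin T → ℝ} {m m' : ℝ} (hpr : p < r)
    (hrT : r ≤ T) (hm : ∀ t, m ≤ d t + u t) (hv : ∀ n ∈ Ico p r, zeroExtend (d + v) n = m')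
    (hp : netCharge v p ≤ netCharge u p) (hr : netCharge u r ≤ netCharge v r) : m ≤ m' := by
  have hm' : ∀ n ∈ Ico p r, m ≤ zeroExtend (d + u) n := fun n hn => by
    rw [zeroExtend_of_lt _ (by grind)]
    exact hm _
  have hcard : (0 : ℝ) < #(Ico p r) := by simp [hpr]
  refine le_of_mul_le_mul_left ?_ hcard
  calc #(Ico p r) * m ≤ ∑ n ∈ Ico p r, zeroExtend (d + u) n := by
        simpa using card_nsmul_le_sum _ _ _ hm'
    _ ≤ ∑ n ∈ Ico p r, zeroExtend (d + v) n := by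
        rw [sum_Ico_zeroExtend_add d u hpr.le, sum_Ico_zeroExtend_add d v hpr.le]
        linarith
    _ = #(Ico p r) * m' := by simp [sum_congr rfl hv]

section Comparison

variable {T k : ℕ} {a b c E E' : ℝ} {d u v : Fin T → ℝ}

lemma netCharge_succ_le_of_lt_succ (ha : 0 < a) (hE : E ≤ E') (hu : poolFeasible T E u)
    (hv : poolFeasible T E' v) (hopt : IsMinOn (poolCost T a b c d) {w | poolFeasible T E' w} v)
    (hk : k + 1 < T) (hrise : zeroExtend (d + v) k < zeroExtend (d + v) (k + 1)) :
    netCharge u (k + 1) ≤ netCharge v (k + 1) := by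
  have hfull : E' / 2 + netCharge v (k + 1) = E' := by
    by_contra hne
    have := zeroExtend_succ_le_of_charge_lt ha hopt hv hk
      (lt_of_le_of_ne ((poolFeasible_iff.mp hv).1 k (by omega)).2 hne)
    linarith
  linarith [((poolFeasible_iff.mp hu).1 k (by omega)).2]

lemma netCharge_succ_le_of_succ_lt (ha : 0 < a) (hE : E ≤ E') (hu : poolFeasible T E u)
    (hv : poolFeasible T E' v) (hopt : IsMinOn (poolCost T a b c d) {w | poolFeasible T E' w} v)
    (hk : k + 1 < T) (hfall : zeroExtend (d + v) (k + 1) < zeroExtend (d + v) k) :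
    netCharge v (k + 1) ≤ netCharge u (k + 1) := by
  have hempty : E' / 2 + netCharge v (k + 1) = 0 := by
    by_contra hne
    have := zeroExtend_le_succ_of_charge_pos ha hopt hv hk
      (lt_of_le_of_ne ((poolFeasible_iff.mp hv).1 k (by omega)).1 (Ne.symm hne))
    linarith
  linarith [((poolFeasible_iff.mp hu).1 k (by omega)).1]

theorem le_of_forall_le_of_isMinOn (ha : 0 < a) (hE : E ≤ E') (hu : poolFeasible T E u)
    (hv : poolFeasible T E' v) (hopt : IsMinOn (poolCost T a b c d) {w | poolFeasible T E' w} v)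
    {m : ℝ} (hm : ∀ t, m ≤ d t + u t) (t₀ : Fin T) (ht₀ : ∀ t, d t₀ + v t₀ ≤ d t + v t) :
    m ≤ d t₀ + v t₀ := by
  set g := zeroExtend (d + v)
  have hg : ∀ n < T, d t₀ + v t₀ ≤ g n := fun n hn => by
    simpa [g, zeroExtend_of_lt _ hn] using ht₀ ⟨n, hn⟩
  obtain ⟨p, q, hpt, htq, hqT, hrun, hp, hq⟩ :=
    exists_maximal_run (P := fun n => g n = d t₀ + v t₀) t₀.2 (by simp [g])
  refine le_of_netCharge_le_on_Ico (by omega : p < q + 1) hqT hm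
    (fun n hn => hrun n (mem_Ico.mp hn).1 (by grind)) ?_ ?_
  · rcases p with _ | k
    · simp [netCharge]
    · refine netCharge_succ_le_of_succ_lt ha hE hu hv hopt (by omega) ?_
      show g (k + 1) < g k
      rw [hrun (k + 1) le_rfl (by omega)]
      exact lt_of_le_of_ne (hg k (by omega)) (Ne.symm (hp k rfl))
  · by_cases hq₁ : q + 1 < T
    · refine netCharge_succ_le_of_lt_succ ha hE hu hv hopt hq₁ ?_
      show g q < g (q + 1)
      rw [hrun q (hpt.trans htq) le_rfl]
      exact lt_of_le_of_ne (hg _ hq₁) (Ne.symm (hq hq₁))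
    · rw [show q + 1 = T by omega, (poolFeasible_iff.mp hu).2, (poolFeasible_iff.mp hv).2]

end Comparison

/-- In the pool model (P2),
`LBMCI(E) = a·min_t g*_t(E) + b` is monotonically non-decreasing in `E` on
`[0, ∞)`; equivalently `E ↦ min_t g*_t(E)` is non-decreasing. Here `gstar`
is any selection of optimal generation profiles. -/
theorem pool_lbmci_monotone
    (T : ℕ) (hT : 1 ≤ T) (a b c : ℝ) (ha : 0 < a) (d : Fin T → ℝ)
    (gstar : ℝ → Fin T → ℝ)
    (hgstar : ∀ E : ℝ, 0 ≤ E → ∃ u : Fin T → ℝ, poolFeasible T E u ∧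
      (∀ t, gstar E t = d t + u t) ∧
      poolCost T a b c d u = poolCstar T a b c d E) :
    ∀ E₁ E₂ : ℝ, 0 ≤ E₁ → E₁ ≤ E₂ →
      a * Finset.univ.inf' ⟨⟨0, hT⟩, Finset.mem_univ _⟩ (gstar E₁) + b ≤
        a * Finset.univ.inf' ⟨⟨0, hT⟩, Finset.mem_univ _⟩ (gstar E₂) + b ∧
      Finset.univ.inf' ⟨⟨0, hT⟩, Finset.mem_univ _⟩ (gstar E₁) ≤
        Finset.univ.inf' ⟨⟨0, hT⟩, Finset.mem_univ _⟩ (gstar E₂) := by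
  intro E₁ E₂ hE₁ hE₁₂
  obtain ⟨u₁, hu₁, hg₁, -⟩ := hgstar E₁ hE₁
  obtain ⟨u₂, hu₂, hg₂, hopt₂⟩ := hgstar E₂ (hE₁.trans hE₁₂)
  have hmin : univ.inf' ⟨⟨0, hT⟩, mem_univ _⟩ (gstar E₁) ≤
      univ.inf' ⟨⟨0, hT⟩, mem_univ _⟩ (gstar E₂) := by
    obtain ⟨t₀, -, ht₀⟩ := exists_mem_eq_inf' ⟨⟨0, hT⟩, mem_univ _⟩ (gstar E₂)
    rw [ht₀, hg₂]
    refine le_of_forall_le_of_isMinOn ha hE₁₂ hu₁ hu₂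
      (isMinOn_poolCost_of_eq_poolCstar ha.le hopt₂) (fun t => ?_) t₀ (fun t => ?_)
    · exact hg₁ t ▸ inf'_le _ (mem_univ t)
    · rw [← hg₂, ← hg₂, ← ht₀]
      exact inf'_le _ (mem_univ t)
  exact ⟨by gcongr, hmin⟩
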